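/- Let n ≥ 1 and set Q = 2x²y + y² ∈ ℚ[x,y] (up to the factor 9, Q is the class of the Fano variety of lines of a smooth cubic hypersurface in the Chow ring of the Grassmannian of lines in ℙ^{n+1}). Then: (i) there exists a nonzero polynomial P ∈ ℚ[x,y], weighted homogeneous of degree n−1, such that P·Q ∈ (h_{n+1}, h_{n+2}); and (ii) every nonzero weighted-homogeneous P of degree n−1 with P·Q ∈ (h_{n+1}, h_{n+2}) has nonzero coefficient of the monomial x^{n−1}. (Algebraic form of Proposition 2.7: there is a weighted-degree-(n−1) polynomial relation P(c₁,c₂) = 0 on the Fano variety of lines whose coefficient of c₁^{n−1} is nonzero.) -/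

import Mathlib

/-!
Write `Q = y (2x² + y)`. The conic `2x² + y = 0` passes through `(1, -2)`, so by weighted
homogeneity `h k ≡ c k · x^k` modulo `2x² + y`, where `c k = h k (1, -2)` (`hConic k`, the
Jacobsthal numbers `1, 1, 3, 5, 11, …`). Hence `c (k+2) x h (k+1) - c (k+1) h (k+2)` is
`(2x² + y) R k`, where `R = fanoRelation` satisfies `R (k+2) = c (k+2) h (k+2) - 2y R k`.
As `y x h (k+1) = x² h (k+2) - x h (k+3)`, this puts `R (n-1) Q` in `(h (n+1), h (n+2))`, and
setting `y = 0` shows `R (n-1) ≠ 0`.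

Conversely, the part of weighted degree `n + 3` of the ideal is spanned by `x² h (n+1)`,
`y h (n+1)` and `x h (n+2)`. If `P Q = (α x² + β y) h (n+1) + γ x h (n+2)` and `P` has no
`x^{n-1}` term, setting `y = 0` twice gives `γ = β = -α`, so `(2x² + y) P = α y h (n-1)`;
evaluating at `(1, -2)`, where `h (n-1) = c (n-1) > 0`, gives `α = 0` and hence `P = 0`.
-/

open MvPolynomial

/-- The complete homogeneous symmetric polynomial of degree `k` in two variables,
expressed in the elementary symmetric polynomials `x = X 0`, `y = X 1`. -/
noncomputable def h : ℕ → MvPolynomial (Fin 2) ℚ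
  | 0 => 1
  | 1 => X 0
  | (k + 2) => X 0 * h (k + 1) - X 1 * h k

open Finsupp

lemma weightedHomogeneousComponent_mul_of_isWeightedHomogeneous {σ R M : Type*} [CommSemiring R]
    [AddCancelCommMonoid M] {w : σ → M} {g : MvPolynomial σ R} {m : M}
    (hg : g.IsWeightedHomogeneous w m) (f : MvPolynomial σ R) (d : M) :
    weightedHomogeneousComponent w (d + m) (f * g) = weightedHomogeneousComponent w d f * g := by
  classical
  let := weightedGradedAlgebra R w
  simpa only [← DirectSum.Decomposition.decompose'_eq, weightedDecomposition.decompose'_apply]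
    using DirectSum.coe_decompose_mul_add_of_right_mem (weightedHomogeneousSubmodule R w) (a := f)
      (i := d) ((mem_weightedHomogeneousSubmodule R w m g).2 hg)

section TwoVariables

variable {R : Type*} [CommSemiring R]

lemma coeff_X_zero_pow_mul_X_one_pow (a b s t : ℕ) :
    coeff (single 0 s + single 1 t) (X 0 ^ a * X 1 ^ b : MvPolynomial (Fin 2) R) =
      if a = s ∧ b = t then 1 else 0 := by
  rw [X_pow_eq_monomial, X_pow_eq_monomial, monomial_mul, one_mul, coeff_monomial]
  congr 1
  apply propext
  constructor
  · intro hst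
    exact ⟨by simpa using DFunLike.congr_fun hst 0, by simpa using DFunLike.congr_fun hst 1⟩
  · rintro ⟨rfl, rfl⟩
    rfl

lemma weight_single_zero_add_single_one (s t : ℕ) :
    weight ![1, 2] (single (0 : Fin 2) s + single 1 t) = s + 2 * t := by
  simp [map_add, weight_apply, Finsupp.sum_single_index, mul_comm]

lemma MvPolynomial.IsWeightedHomogeneous.eq_sum_range {d : ℕ} {f : MvPolynomial (Fin 2) R}
    (hf : f.IsWeightedHomogeneous ![1, 2] d) :
    f = ∑ b ∈ Finset.range (d / 2 + 1),
      C (coeff (single 0 (d - 2 * b) + single 1 b) f) * X 0 ^ (d - 2 * b) * X 1 ^ b := by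
  ext m
  obtain ⟨s, t, rfl⟩ : ∃ s t, m = single 0 s + single 1 t :=
    ⟨m 0, m 1, by ext i; fin_cases i <;> simp⟩
  simp only [coeff_sum, mul_assoc, coeff_C_mul, coeff_X_zero_pow_mul_X_one_pow, mul_ite, mul_one,
    mul_zero]
  by_cases hst : s + 2 * t = d
  · rw [Finset.sum_eq_single t]
    · rw [if_pos ⟨by omega, rfl⟩, show d - 2 * t = s by omega]
    · intro b _ hbt
      exact if_neg fun hb => hbt hb.2
    · intro ht
      simp only [Finset.mem_range] at ht
      omega
  · rw [hf.coeff_eq_zero _ (by rw [weight_single_zero_add_single_one]; exact hst)]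
    refine (Finset.sum_eq_zero fun b hb => if_neg ?_).symm
    simp only [Finset.mem_range] at hb
    omega

variable (R) in
noncomputable def setYZero : MvPolynomial (Fin 2) R →ₐ[R] MvPolynomial (Fin 2) R :=
  aeval ![X 0, 0]

@[simp]
lemma setYZero_X_zero : setYZero R (X 0) = X 0 := by
  simp [setYZero]

@[simp]
lemma setYZero_X_one : setYZero R (X 1) = 0 := by
  simp [setYZero]

@[simp]
lemma setYZero_C (r : R) : setYZero R (C r) = C r := by
  simp [setYZero, algebraMap_eq]

lemma MvPolynomial.IsWeightedHomogeneous.setYZero_eq {d : ℕ} {f : MvPolynomial (Fin 2) R}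
    (hf : f.IsWeightedHomogeneous ![1, 2] d) :
    setYZero R f = C (coeff (single 0 d) f) * X 0 ^ d := by
  conv_lhs => rw [hf.eq_sum_range]
  simp [Finset.sum_range_succ']

end TwoVariables

lemma h_add_two (k : ℕ) : h (k + 2) = X 0 * h (k + 1) - X 1 * h k := by
  rw [h]

lemma isWeightedHomogeneous_h (k : ℕ) : (h k).IsWeightedHomogeneous ![1, 2] k := by
  induction k using Nat.twoStepInduction with
  | zero => exact isWeightedHomogeneous_one ℚ _
  | one => simpa [h] using isWeightedHomogeneous_X ℚ ![1, 2] 0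
  | more k ih₀ ih₁ =>
    rw [h_add_two]
    have h₁ := (isWeightedHomogeneous_X ℚ ![1, 2] 0).mul ih₁
    have h₀ := (isWeightedHomogeneous_X ℚ ![1, 2] 1).mul ih₀
    simp only [Matrix.cons_val_zero, Matrix.cons_val_one] at h₁ h₀
    rw [show 1 + (k + 1) = k + 2 by omega] at h₁
    rw [show 2 + k = k + 2 by omega] at h₀
    exact h₁.sub h₀

lemma setYZero_h (k : ℕ) : setYZero ℚ (h k) = X 0 ^ k := by
  induction k using Nat.twoStepInduction with
  | zero => simp [h]
  | one => simp [h]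
  | more k _ ih₁ =>
    rw [h_add_two, map_sub, map_mul, map_mul, ih₁]
    simp only [setYZero_X_zero, setYZero_X_one, zero_mul, sub_zero]
    ring

noncomputable def hConic (k : ℕ) : ℚ := eval ![1, -2] (h k)

lemma hConic_add_two (k : ℕ) : hConic (k + 2) = hConic (k + 1) + 2 * hConic k := by
  simp [hConic, h_add_two]

lemma hConic_pos (k : ℕ) : 0 < hConic k := by
  induction k using Nat.twoStepInduction with
  | zero => simp [hConic, h]
  | one => simp [hConic, h]
  | more k ih₀ ih₁ => rw [hConic_add_two]; positivity

noncomputable def fanoRelation : ℕ → MvPolynomial (Fin 2) ℚ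
  | 0 => 1
  | 1 => X 0
  | (k + 2) => C (hConic (k + 2)) * h (k + 2) - 2 * X 1 * fanoRelation k

lemma fanoRelation_mul (k : ℕ) : fanoRelation k * (2 * X 0 ^ 2 + X 1) =
    C (hConic (k + 2)) * X 0 * h (k + 1) - C (hConic (k + 1)) * h (k + 2) := by
  induction k using Nat.twoStepInduction with
  | zero => simp [fanoRelation, hConic, h, map_ofNat]; ring
  | one => norm_num [fanoRelation, hConic, h, map_ofNat]; ring
  | more k ih₀ _ =>
    have c₄ := congrArg (C : ℚ → MvPolynomial (Fin 2) ℚ) (hConic_add_two (k + 2))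
    have c₃ := congrArg (C : ℚ → MvPolynomial (Fin 2) ℚ) (hConic_add_two (k + 1))
    simp only [map_add, map_mul, map_ofNat] at c₃ c₄
    rw [fanoRelation]
    linear_combination (-2 * X 1) * ih₀ - X 0 * h (k + 3) * c₄ - X 1 * h (k + 2) * c₃ +
      C (hConic (k + 3)) * h_add_two (k + 2) - 2 * C (hConic (k + 2)) * X 0 * h_add_two (k + 1)

lemma isWeightedHomogeneous_fanoRelation (k : ℕ) :
    (fanoRelation k).IsWeightedHomogeneous ![1, 2] k := by
  induction k using Nat.twoStepInduction with
  | zero => exact isWeightedHomogeneous_one ℚ _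
  | one => simpa [fanoRelation] using isWeightedHomogeneous_X ℚ ![1, 2] 0
  | more k ih₀ _ =>
    rw [fanoRelation]
    have h₀ := ((isWeightedHomogeneous_X ℚ ![1, 2] 1).mul ih₀).C_mul 2
    rw [map_ofNat, ← mul_assoc] at h₀
    simp only [Matrix.cons_val_one, Matrix.cons_val_zero] at h₀
    rw [show 2 + k = k + 2 by omega] at h₀
    exact ((isWeightedHomogeneous_h (k + 2)).C_mul _).sub h₀

lemma setYZero_fanoRelation (k : ℕ) :
    setYZero ℚ (fanoRelation k) = C (hConic k) * X 0 ^ k := by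
  induction k using Nat.twoStepInduction with
  | zero => simp [fanoRelation, hConic, h]
  | one => simp [fanoRelation, hConic, h]
  | more k ih₀ _ =>
    rw [fanoRelation, map_sub, map_mul, map_mul, map_mul, ih₀, setYZero_h]
    simp

lemma fanoRelation_ne_zero (k : ℕ) : fanoRelation k ≠ 0 := by
  intro h₀
  have := setYZero_fanoRelation k
  rw [h₀, map_zero] at this
  simpa [(hConic_pos k).ne'] using this.symm

lemma fanoRelation_mul_mem_span (m : ℕ) :
    fanoRelation m * (2 * X 0 ^ 2 * X 1 + X 1 ^ 2) ∈ Ideal.span {h (m + 2), h (m + 3)} :=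
  Ideal.mem_span_pair.2 ⟨C (hConic (m + 2)) * X 0 ^ 2 - C (hConic (m + 1)) * X 1,
    -C (hConic (m + 2)) * X 0, by
      linear_combination
        (-X 1) * fanoRelation_mul m - C (hConic (m + 2)) * X 0 * h_add_two (m + 1)⟩

lemma exists_eq_of_mem_span_of_isWeightedHomogeneous {m : ℕ} {f : MvPolynomial (Fin 2) ℚ}
    (hf : f.IsWeightedHomogeneous ![1, 2] (m + 4))
    (hmem : f ∈ Ideal.span {h (m + 2), h (m + 3)}) :
    ∃ α β γ : ℚ, (C α * X 0 ^ 2 + C β * X 1) * h (m + 2) + C γ * X 0 * h (m + 3) = f := by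
  obtain ⟨a, b, hab⟩ := Ideal.mem_span_pair.1 hmem
  have hdeg := congrArg (weightedHomogeneousComponent ![1, 2] (m + 4)) hab
  rw [map_add, hf.weightedHomogeneousComponent_same, show m + 4 = 2 + (m + 2) by ring,
    weightedHomogeneousComponent_mul_of_isWeightedHomogeneous (isWeightedHomogeneous_h _),
    show 2 + (m + 2) = 1 + (m + 3) by ring,
    weightedHomogeneousComponent_mul_of_isWeightedHomogeneous (isWeightedHomogeneous_h _),
    (weightedHomogeneousComponent_isWeightedHomogeneous 2 a).eq_sum_range,
    (weightedHomogeneousComponent_isWeightedHomogeneous 1 b).eq_sum_range] at hdeg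
  simp only [Finset.sum_range_succ, Finset.sum_range_zero] at hdeg
  exact ⟨_, _, _, by simpa using hdeg⟩

lemma eq_zero_of_mul_conic_eq {m : ℕ} {P : MvPolynomial (Fin 2) ℚ} {α : ℚ}
    (hP : P * (2 * X 0 ^ 2 + X 1) = C α * X 1 * h m) : P = 0 := by
  have hα : α = 0 := by
    have := congrArg (eval ![1, -2]) hP
    simp at this
    exact this.resolve_right (hConic_pos m).ne'
  have hconic : (2 * X 0 ^ 2 + X 1 : MvPolynomial (Fin 2) ℚ) ≠ 0 := by
    intro h₀
    simpa using congrArg (eval ![0, 1]) h₀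
  rw [hα, C_0, zero_mul, zero_mul] at hP
  exact (mul_eq_zero.1 hP).resolve_right hconic

lemma eq_zero_of_mul_mem_span_of_coeff_eq_zero {m : ℕ} {P : MvPolynomial (Fin 2) ℚ}
    (hw : P.IsWeightedHomogeneous ![1, 2] m)
    (hmem : P * (2 * X 0 ^ 2 * X 1 + X 1 ^ 2) ∈ Ideal.span {h (m + 2), h (m + 3)})
    (hc : coeff (single 0 m) P = 0) : P = 0 := by
  have hQ : (2 * X 0 ^ 2 * X 1 + X 1 ^ 2 : MvPolynomial (Fin 2) ℚ).IsWeightedHomogeneous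
      ![1, 2] 4 := by
    have hx := isWeightedHomogeneous_X ℚ ![1, 2] 0
    have hy := isWeightedHomogeneous_X ℚ ![1, 2] 1
    have := (((hx.pow 2).mul hy).C_mul 2).add (hy.pow 2)
    rwa [map_ofNat, ← mul_assoc] at this
  obtain ⟨α, β, γ, hdeg⟩ := exists_eq_of_mem_span_of_isWeightedHomogeneous (hw.mul hQ) hmem
  have hsetP : setYZero ℚ P = 0 := by
    rw [hw.setYZero_eq, hc, C_0, zero_mul]
  have hγ : γ = -α := by
    have := congrArg (setYZero ℚ) hdeg
    simp only [map_add, map_mul, map_pow, setYZero_C, setYZero_X_zero, setYZero_X_one, setYZero_h,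
      hsetP, zero_mul] at this
    have h' : C (α + γ) * (X 0 : MvPolynomial (Fin 2) ℚ) ^ (m + 4) = 0 := by
      rw [C_add]; linear_combination this
    rw [C_mul_X_pow_eq_monomial, monomial_eq_zero] at h'
    linear_combination h'
  subst hγ
  have hy : P * (2 * X 0 ^ 2 + X 1) = C α * X 0 * h (m + 1) + C β * h (m + 2) := by
    apply mul_left_cancel₀ (X_ne_zero 1 : (X 1 : MvPolynomial (Fin 2) ℚ) ≠ 0)
    rw [map_neg] at hdeg
    have e : h (m + 3) = X 0 * h (m + 2) - X 1 * h (m + 1) := h_add_two (m + 1)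
    linear_combination (-1) * hdeg - C α * X 0 * e
  have hβ : β = -α := by
    have := congrArg (setYZero ℚ) hy
    simp only [map_add, map_mul, map_pow, map_ofNat, setYZero_C, setYZero_X_zero, setYZero_X_one,
      setYZero_h, hsetP, zero_mul] at this
    have h' : C (α + β) * (X 0 : MvPolynomial (Fin 2) ℚ) ^ (m + 2) = 0 := by
      rw [C_add]; linear_combination -this
    rw [C_mul_X_pow_eq_monomial, monomial_eq_zero] at h'
    linear_combination h'
  subst hβ
  rw [map_neg] at hy
  exact eq_zero_of_mul_conic_eq (m := m) (α := α) (by linear_combination hy - C α * h_add_two m)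

/-- For `Q = 2x²y + y²` (up to the factor 9 the class of the Fano variety of lines of a
smooth cubic hypersurface in the Chow ring of the Grassmannian of lines in `ℙ^{n+1}`):
(i) there is a nonzero weighted homogeneous `P` of degree `n−1` with
`P·Q ∈ (h_{n+1}, h_{n+2})`, and (ii) every such `P` has nonzero coefficient of `x^{n−1}`. -/
theorem stmt11 (n : ℕ) (hn : 1 ≤ n) :
    (∃ P : MvPolynomial (Fin 2) ℚ, P ≠ 0 ∧ P.IsWeightedHomogeneous ![1, 2] (n - 1) ∧
      P * (2 * X 0 ^ 2 * X 1 + X 1 ^ 2) ∈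
        (Ideal.span {h (n + 1), h (n + 2)} : Ideal (MvPolynomial (Fin 2) ℚ))) ∧
    (∀ P : MvPolynomial (Fin 2) ℚ, P ≠ 0 → P.IsWeightedHomogeneous ![1, 2] (n - 1) →
      P * (2 * X 0 ^ 2 * X 1 + X 1 ^ 2) ∈
        (Ideal.span {h (n + 1), h (n + 2)} : Ideal (MvPolynomial (Fin 2) ℚ)) →
      coeff (Finsupp.single 0 (n - 1)) P ≠ 0) := by
  obtain ⟨m, rfl⟩ : ∃ m, n = m + 1 := ⟨n - 1, by omega⟩
  rw [Nat.add_sub_cancel]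
  exact ⟨⟨fanoRelation m, fanoRelation_ne_zero m, isWeightedHomogeneous_fanoRelation m,
      fanoRelation_mul_mem_span m⟩,
    fun P hP hw hmem hc => hP (eq_zero_of_mul_mem_span_of_coeff_eq_zero hw hmem hc)⟩
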